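/- arXiv:2408.10522 — 3 statements merged into one kernel-verified Lean document; each statement's English description precedes it below -/
import Mathlib

section
/- Let V ∈ ℂ^{K×K} be a Toeplitz matrix with entries V(i,l) = v_{i−l}, where v_m ≠ 0 if and only if m ≡ 1 (mod N). If K is not a multiple of N (i.e., K = iN + j with 1 ≤ j ≤ N−1), then V is singular (det V = 0). -/
/-! A nonzero term of the Leibniz expansion of `det V` needs a permutation `σ` with
`σ l ≡ l + 1 (mod N)` for every `l`. Summing these congruences over all `l` gives `K ≡ 0 (mod N)`,
since `σ` only permutes the left-hand side. -/

open Finset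

theorem Equiv.Perm.card_nsmul_eq_zero_of_map_eq_add {ι G : Type*} [Fintype ι]
    [AddCancelCommMonoid G] (σ : Equiv.Perm ι) (f : ι → G) (c : G)
    (hσ : ∀ l, f (σ l) = f l + c) : Fintype.card ι • c = 0 := by
  have hsum : ∑ l, f l = ∑ l, f l + Fintype.card ι • c := calc
    ∑ l, f l = ∑ l, f (σ l) := (Equiv.sum_comp σ f).symm
    _ = ∑ l, (f l + c) := sum_congr rfl fun l _ => hσ l
    _ = ∑ l, f l + Fintype.card ι • c := by
      rw [sum_add_distrib, sum_const, card_univ]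
  exact (add_eq_left.mp hsum.symm)

theorem Matrix.det_eq_zero_of_ne_zero_imp_eq_add {ι R G : Type*} [Fintype ι] [DecidableEq ι]
    [CommRing R] [AddCancelCommMonoid G] (M : Matrix ι ι R) (f : ι → G) (c : G)
    (hM : ∀ i j, M i j ≠ 0 → f i = f j + c) (hc : Fintype.card ι • c ≠ 0) : M.det = 0 := by
  rw [Matrix.det_apply]
  refine sum_eq_zero fun σ _ => ?_
  suffices hprod : ∏ l, M (σ l) l = 0 by rw [hprod, smul_zero]
  by_contra hprod
  have hσ : ∀ l, f (σ l) = f l + c := fun l =>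
    hM _ _ fun hl => hprod (prod_eq_zero (mem_univ l) hl)
  exact hc (σ.card_nsmul_eq_zero_of_map_eq_add f c hσ)

theorem stmt6_general (K N : ℕ) (hdvd : ¬ N ∣ K)
    (v : ℤ → ℂ) (hv : ∀ m : ℤ, v m ≠ 0 ↔ m ≡ 1 [ZMOD (N : ℤ)])
    (V : Matrix (Fin K) (Fin K) ℂ)
    (hV : ∀ i l : Fin K, V i l = v ((i : ℤ) - (l : ℤ))) :
    V.det = 0 := by
  refine V.det_eq_zero_of_ne_zero_imp_eq_add (fun l => ((l : ℕ) : ZMod N)) 1 ?_ ?_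
  · intro i l hil
    rw [hV, hv, ← ZMod.intCast_eq_intCast_iff] at hil
    push_cast at hil
    linear_combination hil
  · rwa [Fintype.card_fin, nsmul_one, Ne, ZMod.natCast_eq_zero_iff]

theorem stmt6 (K N : ℕ) (hN : 2 ≤ N) (hKN : N < K) (hdvd : ¬ N ∣ K)
    (v : ℤ → ℂ) (hv : ∀ m : ℤ, v m ≠ 0 ↔ m ≡ 1 [ZMOD (N : ℤ)])
    (V : Matrix (Fin K) (Fin K) ℂ)
    (hV : ∀ i l : Fin K, V i l = v ((i : ℤ) - (l : ℤ))) :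
    V.det = 0 :=
  stmt6_general K N hdvd v hv V hV
end

section
/- Let V be a K×K Toeplitz matrix V(i,l) = v_{i−l} with distinct values v_{−(K−1)}, ..., v_0, ..., v_{K−1} (all pairwise different). If P is a permutation matrix such that VP is also Toeplitz, then P is the identity. (Uniqueness of the column ordering recovering the Toeplitz structure.) -/
/-!
The diagonal of a Toeplitz matrix is constant, so the diagonal entries `v (l - σ l)` of `V P`
all coincide, and injectivity of `v` makes the displacement `σ l - l` independent of `l`.
A permutation moves the indices by zero on average, hence this common displacement is `0`.
-/

open Function

theorem Equiv.Perm.eq_refl_of_sub_const {α M : Type*} [Fintype α] [AddCommGroup M]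
    [IsAddTorsionFree M] {σ : Equiv.Perm α} {f : α → M} (hf : Injective f)
    (h : ∀ a b, f (σ a) - f a = f (σ b) - f b) : σ = Equiv.refl α := by
  ext a
  apply hf
  have hsum : ∑ b, (f (σ b) - f b) = 0 := by
    rw [Finset.sum_sub_distrib, Equiv.sum_comp σ f, sub_self]
  have : Nonempty α := ⟨a⟩
  rw [Finset.sum_congr rfl fun b _ => h b a, Finset.sum_const, Finset.card_univ,
    nsmul_eq_zero_iff_right Fintype.card_ne_zero, sub_eq_zero] at hsum
  exact hsum

theorem Fin.abs_coe_sub_coe_le {K : ℕ} (i j : Fin K) : |(i : ℤ) - (j : ℤ)| ≤ (K : ℤ) - 1 := by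
  rw [abs_le]
  omega

theorem stmt15_general (K : ℕ) (v : ℤ → ℂ)
    (hv : ∀ a b : ℤ, |a| ≤ (K : ℤ) - 1 → |b| ≤ (K : ℤ) - 1 → v a = v b → a = b)
    (V : Matrix (Fin K) (Fin K) ℂ)
    (hV : ∀ i l : Fin K, V i l = v ((i : ℤ) - (l : ℤ)))
    (σ : Equiv.Perm (Fin K)) (w : ℤ → ℂ)
    (hw : ∀ i l : Fin K, V i (σ l) = w ((i : ℤ) - (l : ℤ))) :
    σ = Equiv.refl (Fin K) := by
  have hdiag : ∀ l : Fin K, v ((l : ℤ) - (σ l : ℤ)) = w 0 := fun l => by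
    rw [← hV, hw, sub_self]
  refine Equiv.Perm.eq_refl_of_sub_const (f := fun i : Fin K => (i : ℤ))
    (Nat.cast_injective.comp Fin.val_injective) fun a b => ?_
  have hshift := hv _ _ (Fin.abs_coe_sub_coe_le _ _) (Fin.abs_coe_sub_coe_le _ _)
    ((hdiag a).trans (hdiag b).symm)
  omega

theorem stmt15 (K : ℕ) (hK : 2 ≤ K) (v : ℤ → ℂ)
    (hv : ∀ a b : ℤ, |a| ≤ (K : ℤ) - 1 → |b| ≤ (K : ℤ) - 1 → v a = v b → a = b)
    (V : Matrix (Fin K) (Fin K) ℂ)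
    (hV : ∀ i l : Fin K, V i l = v ((i : ℤ) - (l : ℤ)))
    (σ : Equiv.Perm (Fin K)) (w : ℤ → ℂ)
    (hw : ∀ i l : Fin K, V i (σ l) = w ((i : ℤ) - (l : ℤ))) :
    σ = Equiv.refl (Fin K) :=
  stmt15_general K v hv V hV σ w hw
end

section
/- For N = 4 antennas, K = 4 subcarriers, φ = 2/N = 1/2, and BPSK symbols, the two parameter configurations (Δτ = 1/4, τ^o = (3/4, 1/4, 2/4, 0), s = (+1,−1,−1,+1)) and (Δτ = 3/4, τ^o = (0, 2/4, 3/4, 1/4), s = (−1,+1,+1,−1)) yield the same observation vector y = V(Δτ, τ^o, φ)·s, where V is the Toeplitz mixing matrix built from V_m = Σ_{n=1}^4 Δτ·sinc(mπΔτ)·e^{−jmπ(2τ_n^o+Δτ)}·e^{j(n−1)πφ} for m = i − l, scaled by 1/√(NK). -/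
open scoped BigOperators

noncomputable def sinc (x : ℝ) : ℝ := if x = 0 then 1 else Real.sin x / x

/-- Harmonic coefficient V_m of the TMA with N = 4 antennas, common ON duration `Δτ`,
ON instants `τ`, and angular parameter `φ`. -/
noncomputable def Vharm (Δτ : ℝ) (τ : Fin 4 → ℝ) (φ : ℝ) (m : ℤ) : ℂ :=
  ∑ n : Fin 4,
    (Δτ : ℂ) * ((sinc ((m : ℝ) * Real.pi * Δτ) : ℝ) : ℂ) *
      Complex.exp (-Complex.I * (m : ℂ) * (Real.pi : ℂ) * (2 * (τ n : ℂ) + (Δτ : ℂ))) *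
      Complex.exp (Complex.I * ((n : ℕ) : ℂ) * (Real.pi : ℂ) * (φ : ℂ))

/-- The 4×4 Toeplitz mixing matrix built from the harmonics, scaled by 1/√(NK) = 1/√16. -/
noncomputable def Vmat (Δτ : ℝ) (τ : Fin 4 → ℝ) (φ : ℝ) : Matrix (Fin 4) (Fin 4) ℂ :=
  Matrix.of fun i l : Fin 4 => Vharm Δτ τ φ ((i : ℤ) - (l : ℤ)) / (Real.sqrt 16 : ℂ)

/-!
In the second configuration every antenna is ON exactly when it is OFF in the first one
(`τ' = τ + Δτ mod 1`, `Δτ' = 1 - Δτ`). The two switching functions add up to `1`, so their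
Fourier coefficients are opposite at every nonzero frequency, while at frequency `0` both
harmonics vanish because the steering phases `i⁰, i¹, i², i³` sum to zero. Hence
`V' = -V`, and with `s' = -s` the received vectors coincide.
-/

open Complex

/-- The Fourier coefficient `∫₀¹ 𝟙[τ, τ + Δτ](t) e^{-2πimt} dt` of the 1-periodic ON window
of one antenna. -/
noncomputable def switchCoeff (Δτ τ : ℝ) (m : ℤ) : ℂ :=
  (Δτ : ℂ) * ((sinc ((m : ℝ) * Real.pi * Δτ) : ℝ) : ℂ) *
    exp (-I * (m : ℂ) * (Real.pi : ℂ) * (2 * (τ : ℂ) + (Δτ : ℂ)))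

lemma Vharm_eq_sum_switchCoeff (Δτ : ℝ) (τ : Fin 4 → ℝ) (φ : ℝ) (m : ℤ) :
    Vharm Δτ τ φ m = ∑ n : Fin 4,
      switchCoeff Δτ (τ n) m * exp (I * ((n : ℕ) : ℂ) * (Real.pi : ℂ) * (φ : ℂ)) :=
  rfl

lemma mul_sinc_mul {x : ℝ} (hx : x ≠ 0) (a : ℝ) : a * sinc (x * a) = Real.sin (x * a) / x := by
  rcases eq_or_ne a 0 with rfl | ha
  · simp
  · rw [sinc, if_neg (mul_ne_zero hx ha)]
    field_simp

lemma switchCoeff_zero (Δτ τ : ℝ) : switchCoeff Δτ τ 0 = Δτ := by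
  simp [switchCoeff, sinc]

lemma switchCoeff_add_int (Δτ τ : ℝ) (k m : ℤ) :
    switchCoeff Δτ (τ + k) m = switchCoeff Δτ τ m := by
  have hshift : -I * (m : ℂ) * (Real.pi : ℂ) * (2 * ((τ + k : ℝ) : ℂ) + (Δτ : ℂ))
      = -I * (m : ℂ) * (Real.pi : ℂ) * (2 * (τ : ℂ) + (Δτ : ℂ))
        + ((-(m * k) : ℤ) : ℂ) * (2 * Real.pi * I) := by
    push_cast; ring
  rw [switchCoeff, switchCoeff, hshift, exp_add, exp_int_mul_two_pi_mul_I, mul_one]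

lemma switchCoeff_one_sub {m : ℤ} (hm : m ≠ 0) (Δτ τ : ℝ) :
    switchCoeff (1 - Δτ) (τ + Δτ) m = -switchCoeff Δτ τ m := by
  have hmπ : (m : ℝ) * Real.pi ≠ 0 := mul_ne_zero (Int.cast_ne_zero.mpr hm) Real.pi_ne_zero
  have hsinc : (1 - Δτ) * sinc ((m : ℝ) * Real.pi * (1 - Δτ))
      = -((-1) ^ m * (Δτ * sinc ((m : ℝ) * Real.pi * Δτ))) := by
    rw [mul_sinc_mul hmπ, mul_sinc_mul hmπ, mul_one_sub, Real.sin_int_mul_pi_sub]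
    ring
  have hexp : exp (-I * (m : ℂ) * (Real.pi : ℂ) * (2 * ((τ + Δτ : ℝ) : ℂ) + ((1 - Δτ : ℝ) : ℂ)))
      = (-1) ^ m * exp (-I * (m : ℂ) * (Real.pi : ℂ) * (2 * (τ : ℂ) + (Δτ : ℂ))) := by
    have hsplit : -I * (m : ℂ) * (Real.pi : ℂ) * (2 * ((τ + Δτ : ℝ) : ℂ) + ((1 - Δτ : ℝ) : ℂ))
        = m * (-(Real.pi * I)) + -I * (m : ℂ) * (Real.pi : ℂ) * (2 * (τ : ℂ) + (Δτ : ℂ)) := by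
      push_cast; ring
    rw [hsplit, exp_add, exp_int_mul, exp_neg, exp_pi_mul_I, inv_neg, inv_one]
  have hsign : ((-1 : ℂ) ^ m) * (-1) ^ m = 1 := by
    rw [← mul_zpow]
    norm_num
  have hsinc' := congrArg (fun r : ℝ => (r : ℂ)) hsinc
  rw [switchCoeff, switchCoeff, hexp]
  set e := exp (-I * (m : ℂ) * (Real.pi : ℂ) * (2 * (τ : ℂ) + (Δτ : ℂ)))
  push_cast at hsinc' ⊢
  linear_combination e * (-1) ^ m * hsinc' - Δτ * sinc ((m : ℝ) * Real.pi * Δτ) * e * hsign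

lemma sum_exp_I_mul_pi_half :
    ∑ n : Fin 4, exp (I * ((n : ℕ) : ℂ) * (Real.pi : ℂ) * ((1 / 2 : ℝ) : ℂ)) = 0 := by
  have hpow (n : ℕ) : exp (I * (n : ℂ) * (Real.pi : ℂ) * ((1 / 2 : ℝ) : ℂ)) = I ^ n := by
    rw [show I * (n : ℂ) * (Real.pi : ℂ) * ((1 / 2 : ℝ) : ℂ) = n * (Real.pi / 2 * I) by
      push_cast; ring, exp_nat_mul, exp_pi_div_two_mul_I]
  simp only [Fin.sum_univ_four, hpow]
  norm_num

lemma Vharm_one_sub {Δτ φ : ℝ} {τ τ' : Fin 4 → ℝ} (hτ' : ∀ n, ∃ k : ℤ, τ' n = τ n + Δτ + k)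
    (hφ : ∑ n : Fin 4, exp (I * ((n : ℕ) : ℂ) * (Real.pi : ℂ) * (φ : ℂ)) = 0) (m : ℤ) :
    Vharm (1 - Δτ) τ' φ m = -Vharm Δτ τ φ m := by
  rcases eq_or_ne m 0 with rfl | hm
  · simp only [Vharm_eq_sum_switchCoeff, switchCoeff_zero, ← Finset.mul_sum, hφ, mul_zero,
      neg_zero]
  · rw [Vharm_eq_sum_switchCoeff, Vharm_eq_sum_switchCoeff, ← Finset.sum_neg_distrib]
    refine Finset.sum_congr rfl fun n _ => ?_
    obtain ⟨k, hk⟩ := hτ' n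
    rw [hk, switchCoeff_add_int, switchCoeff_one_sub hm, neg_mul]

lemma Vmat_one_sub {Δτ φ : ℝ} {τ τ' : Fin 4 → ℝ} (hτ' : ∀ n, ∃ k : ℤ, τ' n = τ n + Δτ + k)
    (hφ : ∑ n : Fin 4, exp (I * ((n : ℕ) : ℂ) * (Real.pi : ℂ) * (φ : ℂ)) = 0) :
    Vmat (1 - Δτ) τ' φ = -Vmat Δτ τ φ := by
  ext i l
  simp only [Vmat, Matrix.of_apply, Matrix.neg_apply, Vharm_one_sub hτ' hφ, neg_div]

theorem stmt18 :
    (Vmat (1/4) ![3/4, 1/4, 2/4, 0] (1/2)).mulVec ![1, -1, -1, 1]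
      = (Vmat (3/4) ![0, 2/4, 3/4, 1/4] (1/2)).mulVec ![-1, 1, 1, -1] := by
  have hshift : ∀ n, ∃ k : ℤ, (![0, 2/4, 3/4, 1/4] : Fin 4 → ℝ) n
      = (![3/4, 1/4, 2/4, 0] : Fin 4 → ℝ) n + 1/4 + k := by
    intro n
    fin_cases n
    exacts [⟨-1, by norm_num⟩, ⟨0, by norm_num⟩, ⟨0, by norm_num⟩, ⟨0, by norm_num⟩]
  have hV : Vmat (3/4) ![0, 2/4, 3/4, 1/4] (1/2) = -Vmat (1/4) ![3/4, 1/4, 2/4, 0] (1/2) := by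
    convert Vmat_one_sub hshift sum_exp_I_mul_pi_half using 2
    norm_num
  have hs : (![-1, 1, 1, -1] : Fin 4 → ℂ) = -![1, -1, -1, 1] := by
    simp
  rw [hV, hs, Matrix.neg_mulVec, Matrix.mulVec_neg, neg_neg]
end
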